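/- Let d, e be threshold partitions of length n with d(i) = n−1 and d, e arising from threshold graphs. Then the componentwise maximum d ∨ e and componentwise minimum d ∧ e of two threshold partitions of length n are again threshold partitions of length n. -/

import Mathlib

open scoped Classical in
/-- The degree of vertex `v` in the simple graph `G` on `[n]`. -/
noncomputable def degC {n : ℕ} (G : SimpleGraph (Fin n)) (v : Fin n) : ℕ :=
  (Finset.univ.filter (fun w => G.Adj v w)).card

/-- A graph is threshold if every (nonempty) induced subgraph has a
dominating or an isolated vertex. -/
def IsThreshold {n : ℕ} (G : SimpleGraph (Fin n)) : Prop :=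
  ∀ S : Finset (Fin n), S.Nonempty →
    ∃ v ∈ S, (∀ w ∈ S, w ≠ v → G.Adj v w) ∨ (∀ w ∈ S, ¬ G.Adj v w)

/-- `d` is a threshold partition of length `n`: the weakly decreasing
rearrangement of the degree sequence of a threshold graph on `n` vertices. -/
def IsThresholdPartition (n : ℕ) (d : Fin n → ℕ) : Prop :=
  Antitone d ∧ ∃ G : SimpleGraph (Fin n), IsThreshold G ∧
    ∃ σ : Equiv.Perm (Fin n), ∀ i, d i = degC G (σ i)

/-!
Sorting the vertices of a threshold graph by decreasing degree, the neighbourhood of every vertex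
becomes an initial segment of `[n]` (minus the vertex itself), so for `i < j` the edge `ij` is
present iff `j ≤ d i`, and also iff `i < d j`. Conversely, any antitone `d` with values below `n`
for which these two conditions agree is the degree sequence of the threshold graph they define.
Both sides of `j ≤ d i ↔ i < d j` commute with componentwise max and min, hence so does the
property of being a threshold partition.
-/

open Finset
open scoped Classical

lemma degC_eq_degree {n : ℕ} (G : SimpleGraph (Fin n)) (v : Fin n) : degC G v = G.degree v := by
  rw [degC, ← SimpleGraph.card_neighborFinset_eq_degree, SimpleGraph.neighborFinset_eq_filter]

lemma degC_lt {n : ℕ} (G : SimpleGraph (Fin n)) (v : Fin n) : degC G v < n := by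
  simpa [degC_eq_degree] using G.degree_lt_card_verts v

lemma degC_comap {m n : ℕ} (G : SimpleGraph (Fin n)) (f : Fin m ≃ Fin n) (v : Fin m) :
    degC (G.comap f) v = degC G (f v) := by
  simp only [degC_eq_degree]
  exact ((SimpleGraph.Iso.comap f G).degree_eq v).symm

namespace IsThreshold

variable {m n : ℕ} {G : SimpleGraph (Fin n)}

lemma comap (hG : IsThreshold G) (f : Fin m ↪ Fin n) : IsThreshold (G.comap f) := by
  intro S hS
  obtain ⟨_, hv, hdom | hiso⟩ := hG (S.map f) (hS.map)
  all_goals obtain ⟨v, hvS, rfl⟩ := mem_map.1 hv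
  · exact ⟨v, hvS, Or.inl fun w hw hwv =>
      hdom (f w) (mem_map_of_mem f hw) (f.injective.ne hwv)⟩
  · exact ⟨v, hvS, Or.inr fun w hw => hiso (f w) (mem_map_of_mem f hw)⟩

lemma nested (hG : IsThreshold G) (u v : Fin n) :
    (∀ w, w ≠ u → G.Adj v w → G.Adj u w) ∨
      (∀ w, w ≠ v → G.Adj u w → G.Adj v w) := by
  by_contra! ⟨⟨a, hau, hva, hua⟩, ⟨b, hbv, hub, hvb⟩⟩
  -- `ua`, `vb` are non-edges and `ub`, `va` edges, so in `{u, v, a, b}` no vertex dominates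
  -- and none is isolated.
  obtain ⟨x, hx, hdom | hiso⟩ := hG {u, v, a, b} (insert_nonempty _ _)
  · simp only [mem_insert, mem_singleton] at hx
    rcases hx with rfl | rfl | rfl | rfl
    · exact hua (hdom a (by simp) hau)
    · exact hvb (hdom b (by simp) hbv)
    · exact hua (hdom u (by simp) hau.symm).symm
    · exact hvb (hdom v (by simp) hbv.symm).symm
  · simp only [mem_insert, mem_singleton] at hx
    rcases hx with rfl | rfl | rfl | rfl
    · exact hiso b (by simp) hub
    · exact hiso a (by simp) hva
    · exact hiso v (by simp) hva.symm
    · exact hiso u (by simp) hub.symm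

lemma adj_of_adj_of_degC_le (hG : IsThreshold G) {u v w : Fin n}
    (hdeg : degC G v ≤ degC G u) (hwu : w ≠ u) (hvw : G.Adj v w) : G.Adj u w := by
  rcases hG.nested u v with h | h
  · exact h w hwu hvw
  by_contra huw
  have hsub :
      (univ.filter fun x => G.Adj u x).erase v ⊂ (univ.filter fun x => G.Adj v x).erase u := by
    refine (ssubset_iff_of_subset fun x hx => ?_).2 ⟨w, ?_, ?_⟩
    · obtain ⟨hxv, hux⟩ := mem_erase.1 hx
      have hux := (mem_filter.1 hux).2
      exact mem_erase.2 ⟨(G.ne_of_adj hux).symm, mem_filter.2 ⟨mem_univ x, h x hxv hux⟩⟩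
    · simpa [hwu] using hvw
    · simp [huw]
  have hlt := card_lt_card hsub
  unfold degC at hdeg
  by_cases huv : G.Adj u v
  · rw [card_erase_of_mem (by simpa), card_erase_of_mem (by simpa using huv.symm)] at hlt
    omega
  · rw [erase_eq_of_notMem (by simpa), erase_eq_of_notMem (by simpa using fun h => huv h.symm)]
      at hlt
    omega

variable (hG : IsThreshold G) (hd : Antitone (degC G))
include hG hd

lemma adj_of_le {u v w : Fin n} (hvw : G.Adj v w) (huw : u ≤ w) (huv : u ≠ v) : G.Adj v u := by
  obtain rfl | huw := huw.eq_or_lt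
  · exact hvw
  · exact (hG.adj_of_adj_of_degC_le (hd huw.le) huv.symm hvw.symm).symm

lemma card_erase_Iic_le_degC {v w : Fin n} (hvw : G.Adj v w) : #((Iic w).erase v) ≤ degC G v :=
  card_le_card fun u hu => by
    rw [mem_erase, mem_Iic] at hu
    exact mem_filter.2 ⟨mem_univ _, hG.adj_of_le hd hvw hu.2 hu.1⟩

lemma degC_le_card_erase_Iio {v w : Fin n} (hvw : ¬G.Adj v w) (hne : v ≠ w) :
    degC G v ≤ #((Iio w).erase v) :=
  card_le_card fun u hu => by
    have hvu := (mem_filter.1 hu).2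
    exact mem_erase.2 ⟨(G.ne_of_adj hvu).symm,
      mem_Iio.2 (lt_of_not_ge fun hwu => hvw (hG.adj_of_le hd hvu hwu hne.symm))⟩

lemma adj_iff_le_degC {i j : Fin n} (hij : i < j) : G.Adj i j ↔ (j : ℕ) ≤ degC G i := by
  constructor
  · intro hadj
    have := hG.card_erase_Iic_le_degC hd hadj
    rwa [card_erase_of_mem (mem_Iic.2 hij.le), Fin.card_Iic, Nat.add_sub_cancel] at this
  · contrapose!
    intro hadj
    have := hG.degC_le_card_erase_Iio hd hadj hij.ne
    rw [card_erase_of_mem (mem_Iio.2 hij), Fin.card_Iio] at this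
    have : (i : ℕ) < j := hij
    omega

lemma adj_iff_lt_degC {i j : Fin n} (hij : i < j) : G.Adj i j ↔ (i : ℕ) < degC G j := by
  constructor
  · intro hadj
    have := hG.card_erase_Iic_le_degC hd hadj.symm
    rwa [erase_eq_of_notMem (by simpa using hij), Fin.card_Iic, Nat.add_one_le_iff] at this
  · contrapose!
    intro hadj
    have := hG.degC_le_card_erase_Iio hd (fun h => hadj h.symm) hij.ne'
    rwa [erase_eq_of_notMem (by simpa using hij.le), Fin.card_Iio] at this

end IsThreshold

/-- The numerical form of a threshold partition: `i < j` form an edge iff `j ≤ d i`,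
equivalently iff `i < d j`. -/
structure IsThresholdSeq (n : ℕ) (d : Fin n → ℕ) : Prop where
  antitone : Antitone d
  lt : ∀ i, d i < n
  le_iff_lt : ∀ i j : Fin n, i < j → ((j : ℕ) ≤ d i ↔ (i : ℕ) < d j)

section ThresholdSeq

variable {n : ℕ} {d e : Fin n → ℕ}

lemma IsThresholdPartition.isThresholdSeq (h : IsThresholdPartition n d) : IsThresholdSeq n d := by
  obtain ⟨hanti, G, hG, σ, hdeg⟩ := h
  have hH : IsThreshold (G.comap σ) := hG.comap σ.toEmbedding
  obtain rfl : degC (G.comap σ) = d := funext fun i => (degC_comap G σ i).trans (hdeg i).symm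
  exact ⟨hanti, degC_lt _, fun i j hij =>
    (hH.adj_iff_le_degC hanti hij).symm.trans (hH.adj_iff_lt_degC hanti hij)⟩

def shiftedGraph (d : Fin n → ℕ) : SimpleGraph (Fin n) :=
  SimpleGraph.fromRel fun i j => i < j ∧ (j : ℕ) ≤ d i

lemma shiftedGraph_adj {i j : Fin n} (hij : i < j) :
    (shiftedGraph d).Adj i j ↔ (j : ℕ) ≤ d i := by
  simp [shiftedGraph, hij, hij.ne, hij.not_gt]

lemma shiftedGraph_isThreshold (hd : Antitone d) : IsThreshold (shiftedGraph d) := by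
  intro S hS
  by_cases hab : (shiftedGraph d).Adj (S.min' hS) (S.max' hS)
  · have hlt := lt_of_le_of_ne (S.min'_le _ (S.max'_mem hS)) hab.ne
    refine ⟨S.min' hS, S.min'_mem hS, Or.inl fun w hw hwa => ?_⟩
    have haw := lt_of_le_of_ne (S.min'_le w hw) (Ne.symm hwa)
    exact (shiftedGraph_adj haw).2
      ((Fin.le_def.1 (S.le_max' w hw)).trans ((shiftedGraph_adj (d := d) hlt).1 hab))
  · refine ⟨S.max' hS, S.max'_mem hS, Or.inr fun w hw hbw => hab ?_⟩
    have hwb := lt_of_le_of_ne (S.le_max' w hw) hbw.ne'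
    have haw := S.min'_le w hw
    exact (shiftedGraph_adj (haw.trans_lt hwb)).2
      (((shiftedGraph_adj hwb).1 hbw.symm).trans (hd haw))

lemma IsThresholdSeq.degC_shiftedGraph (h : IsThresholdSeq n d) (i : Fin n) :
    degC (shiftedGraph d) i = d i := by
  have hadj : ∀ w, (shiftedGraph d).Adj i w ↔
      w ≠ i ∧ ((w : ℕ) < d i ∨ (i < w ∧ (w : ℕ) ≤ d i)) := by
    intro w
    rcases lt_trichotomy w i with hw | rfl | hw
    · rw [SimpleGraph.adj_comm, shiftedGraph_adj hw, h.le_iff_lt w i hw]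
      simp [hw.ne, hw.not_gt]
    · simp
    · rw [shiftedGraph_adj hw]
      have : (i : ℕ) < w := hw
      refine ⟨fun hle => ⟨hw.ne', Or.inr ⟨hw, hle⟩⟩, ?_⟩
      rintro ⟨-, hlt | ⟨-, hle⟩⟩ <;> omega
  rcases le_or_gt (d i) i with hdi | hid
  · have : (univ.filter fun w => (shiftedGraph d).Adj i w) = Iio (⟨d i, h.lt i⟩ : Fin n) := by
      ext w
      simp only [mem_filter, mem_univ, true_and, hadj, mem_Iio, Fin.lt_def, Fin.ne_iff_vne]
      omega
    rw [degC, this, Fin.card_Iio]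
  · have : (univ.filter fun w => (shiftedGraph d).Adj i w) =
        (Iic (⟨d i, h.lt i⟩ : Fin n)).erase i := by
      ext w
      simp only [mem_filter, mem_univ, true_and, hadj, mem_erase, mem_Iic, Fin.lt_def, Fin.le_def,
        Fin.ne_iff_vne]
      omega
    rw [degC, this, card_erase_of_mem (mem_Iic.2 (show i ≤ ⟨d i, h.lt i⟩ from hid.le)),
      Fin.card_Iic, Nat.add_sub_cancel]

lemma IsThresholdSeq.isThresholdPartition (h : IsThresholdSeq n d) : IsThresholdPartition n d :=
  ⟨h.antitone, shiftedGraph d, shiftedGraph_isThreshold h.antitone, Equiv.refl _,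
    fun i => (h.degC_shiftedGraph i).symm⟩

lemma isThresholdPartition_iff_isThresholdSeq : IsThresholdPartition n d ↔ IsThresholdSeq n d :=
  ⟨IsThresholdPartition.isThresholdSeq, IsThresholdSeq.isThresholdPartition⟩

lemma IsThresholdSeq.max (hd : IsThresholdSeq n d) (he : IsThresholdSeq n e) :
    IsThresholdSeq n fun i => max (d i) (e i) where
  antitone _ _ hij := max_le_max (hd.antitone hij) (he.antitone hij)
  lt i := max_lt (hd.lt i) (he.lt i)
  le_iff_lt i j hij := by
    simp only [le_max_iff, lt_max_iff, hd.le_iff_lt i j hij, he.le_iff_lt i j hij]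

lemma IsThresholdSeq.min (hd : IsThresholdSeq n d) (he : IsThresholdSeq n e) :
    IsThresholdSeq n fun i => min (d i) (e i) where
  antitone _ _ hij := min_le_min (hd.antitone hij) (he.antitone hij)
  lt i := min_lt_of_left_lt (hd.lt i)
  le_iff_lt i j hij := by
    simp only [le_min_iff, lt_min_iff, hd.le_iff_lt i j hij, he.le_iff_lt i j hij]

end ThresholdSeq

/-- the componentwise maximum and minimum of two threshold
partitions of length `n` are again threshold partitions of length `n`. -/
theorem threshold_partitions_lattice (n : ℕ) (d e : Fin n → ℕ)
    (hd : IsThresholdPartition n d) (he : IsThresholdPartition n e) :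
    IsThresholdPartition n (fun i => max (d i) (e i)) ∧
    IsThresholdPartition n (fun i => min (d i) (e i)) := by
  rw [isThresholdPartition_iff_isThresholdSeq] at hd he
  exact ⟨(hd.max he).isThresholdPartition, (hd.min he).isThresholdPartition⟩
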